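/- arXiv:1012.5844 — 2 statements merged into one kernel-verified Lean document; each statement's English description precedes it below -/
import Mathlib

section
/- For any pairwise distinct scalars α, β, γ in the ground field and any i with 1 ≤ i ≤ n−2, the Baxterized elements satisfy the Yang–Baxter equation with spectral parameters: σ_i(α,β) σ_{i+1}(α,γ) σ_i(β,γ) = σ_{i+1}(β,γ) σ_i(α,γ) σ_{i+1}(α,β). -/
/-- Generators of the cyclotomic Hecke algebra `H(m,1,n)`:
`tau` and `sig i` (representing `σ_{i+1}`) for `i : Fin (n-1)`. -/
inductive CycGen (n : ℕ) : Type
  | tau : CycGen n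
  | sig : Fin (n - 1) → CycGen n

/-- The defining relations of the cyclotomic Hecke algebra `H(m,1,n)` with
parameters `q`, `qinv` (playing the role of `q⁻¹`) and `v : Fin m → R`. -/
inductive cycRel (R : Type) [CommRing R] (m n : ℕ) (q qinv : R) (v : Fin m → R) :
    FreeAlgebra R (CycGen n) → FreeAlgebra R (CycGen n) → Prop
  | braid (i j : Fin (n - 1)) (h : (j : ℕ) = (i : ℕ) + 1) :
      cycRel R m n q qinv v
        (FreeAlgebra.ι R (CycGen.sig i) * FreeAlgebra.ι R (CycGen.sig j) *
          FreeAlgebra.ι R (CycGen.sig i))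
        (FreeAlgebra.ι R (CycGen.sig j) * FreeAlgebra.ι R (CycGen.sig i) *
          FreeAlgebra.ι R (CycGen.sig j))
  | comm (i j : Fin (n - 1)) (h : (i : ℕ) + 1 < (j : ℕ)) :
      cycRel R m n q qinv v
        (FreeAlgebra.ι R (CycGen.sig i) * FreeAlgebra.ι R (CycGen.sig j))
        (FreeAlgebra.ι R (CycGen.sig j) * FreeAlgebra.ι R (CycGen.sig i))
  | tauSigma (i : Fin (n - 1)) (h : (i : ℕ) = 0) :
      cycRel R m n q qinv v
        (FreeAlgebra.ι R CycGen.tau * FreeAlgebra.ι R (CycGen.sig i) *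
          FreeAlgebra.ι R CycGen.tau * FreeAlgebra.ι R (CycGen.sig i))
        (FreeAlgebra.ι R (CycGen.sig i) * FreeAlgebra.ι R CycGen.tau *
          FreeAlgebra.ι R (CycGen.sig i) * FreeAlgebra.ι R CycGen.tau)
  | tauComm (i : Fin (n - 1)) (h : 0 < (i : ℕ)) :
      cycRel R m n q qinv v
        (FreeAlgebra.ι R CycGen.tau * FreeAlgebra.ι R (CycGen.sig i))
        (FreeAlgebra.ι R (CycGen.sig i) * FreeAlgebra.ι R CycGen.tau)
  | quadratic (i : Fin (n - 1)) :
      cycRel R m n q qinv v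
        (FreeAlgebra.ι R (CycGen.sig i) * FreeAlgebra.ι R (CycGen.sig i))
        ((q - qinv) • FreeAlgebra.ι R (CycGen.sig i) + 1)
  | cyclotomic :
      cycRel R m n q qinv v
        ((List.ofFn (fun k : Fin m =>
            FreeAlgebra.ι R CycGen.tau - algebraMap R (FreeAlgebra R (CycGen n)) (v k))).prod)
        0

/-- The cyclotomic Hecke algebra `H(m,1,n)`. -/
abbrev CycHecke (R : Type) [CommRing R] (m n : ℕ) (q qinv : R) (v : Fin m → R) : Type :=
  RingQuot (cycRel R m n q qinv v)

variable (R : Type) [CommRing R] (m n : ℕ) (q qinv : R) (v : Fin m → R)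

/-- The generator `τ` of `H(m,1,n)`. -/
noncomputable def tauH : CycHecke R m n q qinv v :=
  RingQuot.mkAlgHom R (cycRel R m n q qinv v) (FreeAlgebra.ι R CycGen.tau)

/-- The generator `σ_{i+1}` of `H(m,1,n)`, for `i : Fin (n-1)`. -/
noncomputable def sigH (i : Fin (n - 1)) : CycHecke R m n q qinv v :=
  RingQuot.mkAlgHom R (cycRel R m n q qinv v) (FreeAlgebra.ι R (CycGen.sig i))

/-- The generator `σ_{k+1}` of `H(m,1,n)`, for `k : ℕ` (defined as `1` out of range). -/
noncomputable def sigN (k : ℕ) : CycHecke R m n q qinv v :=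
  if h : k < n - 1 then sigH R m n q qinv v ⟨k, h⟩ else 1

/-- The inverse `σ_{k+1}⁻¹ = σ_{k+1} - (q - q⁻¹)` of the generator `σ_{k+1}`. -/
noncomputable def sigInvN (k : ℕ) : CycHecke R m n q qinv v :=
  sigN R m n q qinv v k - algebraMap R (CycHecke R m n q qinv v) (q - qinv)

/-- `leftW j = σ_j⁻¹ σ_{j-1}⁻¹ ⋯ σ_1⁻¹` (with `leftW 0 = 1`). -/
noncomputable def leftW : ℕ → CycHecke R m n q qinv v
  | 0 => 1
  | j + 1 => sigInvN R m n q qinv v j * leftW j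

/-- `rW k = σ_1 σ_2 ⋯ σ_k` (with `rW 0 = 1`). -/
noncomputable def rW : ℕ → CycHecke R m n q qinv v
  | 0 => 1
  | k + 1 => rW k * sigN R m n q qinv v k

/-- The Jucys–Murphy elements: `JM k` is the element `J_{k+1}` of the paper, so
`JM 0 = τ` and `JM (k+1) = σ_{k+1} (JM k) σ_{k+1}`. -/
noncomputable def JM : ℕ → CycHecke R m n q qinv v
  | 0 => tauH R m n q qinv v
  | k + 1 => sigN R m n q qinv v k * JM k * sigN R m n q qinv v k
/-- The Baxterized element `σ_i(α,β) = σ_i + (q-q⁻¹)·β/(α-β)`. -/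
noncomputable def bax (K : Type) [Field K] (m n : ℕ) (q : K) (v : Fin m → K)
    (i : Fin (n - 1)) (α β : K) : CycHecke K m n q q⁻¹ v :=
  sigH K m n q q⁻¹ v i +
    algebraMap K (CycHecke K m n q q⁻¹ v) ((q - q⁻¹) * β / (α - β))


lemma bax_yb_aux {K A : Type} [Field K] [Ring A] [Algebra K A] (d a b c : K) (s t : A)
    (hbraid : s * t * s = t * s * t) (hqs : s * s = d • s + 1) (hqt : t * t = d • t + 1)
    (key : a * c = b * d + a * b + b * c) :
    (s + a • 1) * (t + b • 1) * (s + c • 1) = (t + c • 1) * (s + b • 1) * (t + a • 1) := by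
  have lhs_eq : (s + a • (1 : A)) * (t + b • 1) * (s + c • 1) =
      s * t * s + c • (s * t) + a • (t * s) + (a * c) • s + (a * c) • t
        + (b + a * b * c) • (1 : A) := by
    simp only [mul_add, add_mul, smul_mul_assoc, mul_smul_comm, one_mul, mul_one,
      smul_smul, hqs, smul_add, smul_one]
    match_scalars <;> first | ring1 | linear_combination key | linear_combination -key | linear_combination 2*key | linear_combination -2*key
  have rhs_eq : (t + c • (1 : A)) * (s + b • 1) * (t + a • 1) =
      t * s * t + c • (s * t) + a • (t * s) + (a * c) • s + (a * c) • t
        + (b + a * b * c) • (1 : A) := by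
    simp only [mul_add, add_mul, smul_mul_assoc, mul_smul_comm, one_mul, mul_one,
      smul_smul, hqt, smul_add, smul_one]
    match_scalars <;> first | ring1 | linear_combination key | linear_combination -key | linear_combination 2*key | linear_combination -2*key
  rw [lhs_eq, rhs_eq, hbraid]

lemma bax_yb_key {K : Type} [Field K] (d α β γ : K) (hαβ : α ≠ β) (hαγ : α ≠ γ)
    (hβγ : β ≠ γ) :
    d * β / (α - β) * (d * γ / (β - γ)) =
      d * γ / (α - γ) * d + d * β / (α - β) * (d * γ / (α - γ))
        + d * γ / (α - γ) * (d * γ / (β - γ)) := by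
  have hab : α - β ≠ 0 := sub_ne_zero.mpr hαβ
  have hag : α - γ ≠ 0 := sub_ne_zero.mpr hαγ
  have hbg : β - γ ≠ 0 := sub_ne_zero.mpr hβγ
  field_simp
  ring

/-- For pairwise distinct spectral parameters `α, β, γ` and
consecutive indices `i`, `i+1`, the Baxterized elements satisfy the Yang–Baxter
equation `σ_i(α,β) σ_{i+1}(α,γ) σ_i(β,γ) = σ_{i+1}(β,γ) σ_i(α,γ) σ_{i+1}(α,β)`. -/
theorem bax_yang_baxter (K : Type) [Field K] (m n : ℕ) (q : K) (hq : q ≠ 0)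
    (v : Fin m → K) (hv : ∀ k, v k ≠ 0) (i j : Fin (n - 1)) (hij : (j : ℕ) = (i : ℕ) + 1)
    (α β γ : K) (hαβ : α ≠ β) (hαγ : α ≠ γ) (hβγ : β ≠ γ) :
    bax K m n q v i α β * bax K m n q v j α γ * bax K m n q v i β γ =
      bax K m n q v j β γ * bax K m n q v i α γ * bax K m n q v j α β := by
  have hbraid : sigH K m n q q⁻¹ v i * sigH K m n q q⁻¹ v j * sigH K m n q q⁻¹ v i =
      sigH K m n q q⁻¹ v j * sigH K m n q q⁻¹ v i * sigH K m n q q⁻¹ v j := by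
    have h := RingQuot.mkAlgHom_rel K (cycRel.braid (R := K) (m := m) (n := n)
      (q := q) (qinv := q⁻¹) (v := v) i j hij)
    simpa [sigH, map_mul] using h
  have hqs : sigH K m n q q⁻¹ v i * sigH K m n q q⁻¹ v i =
      (q - q⁻¹) • sigH K m n q q⁻¹ v i + 1 := by
    have h := RingQuot.mkAlgHom_rel K (cycRel.quadratic (R := K) (m := m) (n := n)
      (q := q) (qinv := q⁻¹) (v := v) i)
    simpa [sigH, map_mul, map_add, map_smul, map_one] using h
  have hqt : sigH K m n q q⁻¹ v j * sigH K m n q q⁻¹ v j =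
      (q - q⁻¹) • sigH K m n q q⁻¹ v j + 1 := by
    have h := RingQuot.mkAlgHom_rel K (cycRel.quadratic (R := K) (m := m) (n := n)
      (q := q) (qinv := q⁻¹) (v := v) j)
    simpa [sigH, map_mul, map_add, map_smul, map_one] using h
  simp only [bax, Algebra.algebraMap_eq_smul_one]
  exact bax_yb_aux (q - q⁻¹) ((q - q⁻¹) * β / (α - β)) ((q - q⁻¹) * γ / (α - γ))
    ((q - q⁻¹) * γ / (β - γ)) _ _ hbraid hqs hqt
    (bax_yb_key (q - q⁻¹) α β γ hαβ hαγ hβγ)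
end

section
/- Let V be a C-representation of H(m,1,n) and let e ∈ V be a nonzero common eigenvector of the Jucys–Murphy elements, with J_i e = a_i e for i = 1,…,n. If a_{i+1} ≠ q² a_i and a_{i+1} ≠ q⁻² a_i, then the vector e' = σ_i e − ((q−q⁻¹) a_{i+1}/(a_{i+1}−a_i)) e is a nonzero common eigenvector of the Jucys–Murphy elements with eigenvalue string (a_1,…,a_{i+1},a_i,…,a_n), i.e. the string obtained from (a_1,…,a_n) by exchanging a_i and a_{i+1}. -/
variable (R : Type) [CommRing R] (m n : ℕ) (q qinv : R) (v : Fin m → R)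

/-- The semisimplicity conditions (together with `q ≠ 0`, `v k ≠ 0`) on the
parameters: `1 + q² + ⋯ + q^{2N} ≠ 0` for `0 < N < n`, and `q^{2i} v_j ≠ v_k`
for `j ≠ k` and `-n < i < n`. -/
def SSParams (m n : ℕ) (q : ℂ) (v : Fin m → ℂ) : Prop :=
  (∀ N : ℕ, 0 < N → N < n → ∑ k ∈ Finset.range (N + 1), q ^ (2 * k) ≠ 0) ∧
  (∀ j k : Fin m, j ≠ k → ∀ i : ℤ, -(n : ℤ) < i → i < (n : ℤ) → q ^ (2 * i) * v j ≠ v k)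

/-- A subspace `W` is invariant under an endomorphism `f`. -/
def Invt {V : Type} [AddCommGroup V] [Module ℂ V] (f : Module.End ℂ V)
    (W : Submodule ℂ V) : Prop :=
  ∀ x ∈ W, f x ∈ W

/-- A `C`-representation of `H(m,1,n)`: the Jucys–Murphy elements `J_1,…,J_n`
act by diagonalizable operators, and for every `i = 1,…,n-1` the representation
space is completely reducible over the subalgebra generated by `J_i, J_{i+1}, σ_i`
(every invariant subspace has an invariant complement). -/
def IsCRep (m n : ℕ) (q : ℂ) (v : Fin m → ℂ) {V : Type} [AddCommGroup V] [Module ℂ V]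
    (ρ : CycHecke ℂ m n q q⁻¹ v →ₐ[ℂ] Module.End ℂ V) : Prop :=
  (∀ i < n, ⨆ μ : ℂ, (ρ (JM ℂ m n q q⁻¹ v i)).eigenspace μ = ⊤) ∧
  ∀ i : ℕ, i + 1 < n → ∀ W : Submodule ℂ V,
    Invt (ρ (JM ℂ m n q q⁻¹ v i)) W → Invt (ρ (JM ℂ m n q q⁻¹ v (i + 1))) W →
    Invt (ρ (sigN ℂ m n q q⁻¹ v i)) W →
    ∃ W' : Submodule ℂ V, IsCompl W W' ∧ Invt (ρ (JM ℂ m n q q⁻¹ v i)) W' ∧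
      Invt (ρ (JM ℂ m n q q⁻¹ v (i + 1))) W' ∧ Invt (ρ (sigN ℂ m n q q⁻¹ v i)) W'

/-! The quadratic relation `σ² = (q - q⁻¹) σ + 1` and `J_{i+1} = σ J_i σ` give
`J_i σ = σ J_{i+1} - (q - q⁻¹) J_{i+1}` and `J_{i+1} σ = σ J_i + (q - q⁻¹) J_{i+1}`, so on a
common eigenvector `e` the plane spanned by `e` and `σ e` is stable under `J_i` and `J_{i+1}`, and
`e'` is the vector of that plane on which their eigenvalues are exchanged; the other `J_k`
commute with `σ_i`. The denominator `a_{i+1} - a_i` is nonzero because `J_i` is diagonalizable: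
if `a_{i+1} = a_i`, then `(J_i - a_i) σ e = -(q - q⁻¹) a_i e` would be an eigenvector in the range
of `J_i - a_i`. Finally `e' = 0` would make `e` an eigenvector of `σ` whose eigenvalue `c` solves
`c² = (q - q⁻¹) c + 1`, i.e. `c ∈ {q, -q⁻¹}`, and then `a_{i+1} = c² a_i = q^{±2} a_i`. -/

section QuadraticConjugation

variable {K A : Type*} [CommRing K] [Ring A] [Algebra K A] {s : A} {δ : K}

theorem mul_conj_eq_of_mul_self (hs : s * s = δ • s + 1) (j : A) :
    s * (s * j * s) = δ • (s * j * s) + j * s := by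
  rw [← mul_assoc, ← mul_assoc, hs, add_mul, add_mul, one_mul, smul_mul_assoc, smul_mul_assoc,
    mul_assoc]

theorem conj_mul_eq_of_mul_self (hs : s * s = δ • s + 1) (j : A) :
    s * j * s * s = δ • (s * j * s) + s * j := by
  rw [mul_assoc _ s s, hs, mul_add, mul_one, mul_smul_comm]

end QuadraticConjugation

theorem commute_conj_conj_of_braid {A : Type*} [Monoid A] {s t x : A}
    (hbraid : s * t * s = t * s * t) (htx : Commute t x) :
    Commute s (t * (s * x * s) * t) :=
  calc s * (t * (s * x * s) * t) = s * t * s * x * (s * t) := by simp only [mul_assoc]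
    _ = t * s * (t * x) * (s * t) := by rw [hbraid]; simp only [mul_assoc]
    _ = t * s * x * (t * s * t) := by rw [htx.eq]; simp only [mul_assoc]
    _ = t * (s * x * s) * t * s := by rw [← hbraid]; simp only [mul_assoc]

theorem Module.End.disjoint_eigenspace_range_sub {K V : Type*} [Field K] [AddCommGroup V]
    [Module K V] {f : Module.End K V} (hf : ⨆ μ, f.eigenspace μ = ⊤) (a : K) :
    Disjoint (f.eigenspace a) (LinearMap.range (f - algebraMap K _ a)) := by
  refine (f.eigenspaces_iSupIndep a).mono_right ?_
  rw [LinearMap.range_eq_map, ← hf, Submodule.map_iSup]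
  refine iSup_le fun μ => ?_
  rintro _ ⟨y, hy, rfl⟩
  rw [SetLike.mem_coe, Module.End.mem_eigenspace_iff] at hy
  rcases eq_or_ne μ a with rfl | hμ
  · simp [hy]
  · refine Submodule.mem_iSup_of_mem μ (Submodule.mem_iSup_of_mem hμ ?_)
    rw [Module.End.mem_eigenspace_iff]
    simp only [LinearMap.sub_apply, Module.algebraMap_end_apply, map_sub, map_smul, hy]
    rw [smul_sub, smul_comm μ a y]

section EigenvectorSwap

variable {K V : Type*} [Field K] [AddCommGroup V] [Module K V] {S X : Module.End K V}
  {δ a b c : K} {e : V}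

theorem apply_apply_eq_of_mul_self (hS : S * S = δ • S + 1) (hYe : (S * X * S) e = b • e) :
    X (S e) = b • S e - (δ * b) • e := by
  have hXS : X * S = S * (S * X * S) - δ • (S * X * S) := by
    rw [mul_conj_eq_of_mul_self hS, add_sub_cancel_left]
  rw [← Module.End.mul_apply, hXS, LinearMap.sub_apply, LinearMap.smul_apply, Module.End.mul_apply,
    hYe, map_smul, smul_smul]

theorem conj_apply_apply_eq_of_mul_self (hS : S * S = δ • S + 1) (hXe : X e = a • e)
    (hYe : (S * X * S) e = b • e) :
    (S * X * S) (S e) = a • S e + (δ * b) • e := by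
  have hYS : S * X * S * S = S * X + δ • (S * X * S) := by
    rw [conj_mul_eq_of_mul_self hS, add_comm]
  rw [← Module.End.mul_apply, hYS, LinearMap.add_apply, LinearMap.smul_apply, Module.End.mul_apply,
    hXe, hYe, map_smul, smul_smul]

theorem apply_sub_smul_eq_of_mul_self (hS : S * S = δ • S + 1) (hXe : X e = a • e)
    (hYe : (S * X * S) e = b • e) (hc : c * (b - a) = δ * b) :
    X (S e - c • e) = b • (S e - c • e) := by
  rw [map_sub, map_smul, apply_apply_eq_of_mul_self hS hYe, hXe]
  linear_combination (norm := module) hc • e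

theorem conj_apply_sub_smul_eq_of_mul_self (hS : S * S = δ • S + 1) (hXe : X e = a • e)
    (hYe : (S * X * S) e = b • e) (hc : c * (b - a) = δ * b) :
    (S * X * S) (S e - c • e) = a • (S e - c • e) := by
  rw [map_sub, map_smul, conj_apply_apply_eq_of_mul_self hS hXe hYe, hYe]
  linear_combination (norm := module) (-hc) • e

theorem ne_of_iSup_eigenspace_eq_top {q : K} (hq : q ≠ 0) (hX : ⨆ μ, X.eigenspace μ = ⊤)
    (hS : S * S = (q - q⁻¹) • S + 1) (he : e ≠ 0) (hXe : X e = a • e)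
    (hYe : (S * X * S) e = b • e) (hb : b ≠ q ^ 2 * a) : b ≠ a := by
  rintro rfl
  have hdegenerate : (q - q⁻¹) * b = 0 := by
    have hw : -((q - q⁻¹) * b) • e ∈ X.eigenspace b := by
      rw [Module.End.mem_eigenspace_iff, map_smul, hXe, smul_comm]
    have hr : -((q - q⁻¹) * b) • e ∈ LinearMap.range (X - algebraMap K _ b) := by
      refine ⟨S e, ?_⟩
      rw [LinearMap.sub_apply, Module.algebraMap_end_apply, apply_apply_eq_of_mul_self hS hYe,
        neg_smul, sub_sub_cancel_left]
    have := Submodule.disjoint_def.mp (Module.End.disjoint_eigenspace_range_sub hX b) _ hw hr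
    simpa [he] using this
  rcases mul_eq_zero.mp hdegenerate with hδ | hb0
  · have hq2 : q ^ 2 = 1 := by
      rw [sq]
      nth_rewrite 2 [sub_eq_zero.mp hδ]
      exact mul_inv_cancel₀ hq
    exact hb (by rw [hq2, one_mul])
  · exact hb (by rw [hb0, mul_zero])

theorem apply_ne_smul_of_mul_self {q : K} (hq : q ≠ 0) (hS : S * S = (q - q⁻¹) • S + 1)
    (he : e ≠ 0) (hXe : X e = a • e) (hYe : (S * X * S) e = b • e) (hb₁ : b ≠ q ^ 2 * a)
    (hb₂ : b ≠ q⁻¹ ^ 2 * a) (c : K) : S e ≠ c • e := by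
  intro hSe
  have hc : c * c = (q - q⁻¹) * c + 1 := smul_left_injective K he <| by
    have := LinearMap.congr_fun hS e
    simp only [Module.End.mul_apply, LinearMap.add_apply, LinearMap.smul_apply,
      Module.End.one_apply, hSe, map_smul] at this
    simpa only [mul_smul, add_smul, one_smul] using this
  have hb : b = c * a * c := smul_left_injective K he <| by
    simp only [← hYe, Module.End.mul_apply, hSe, hXe, map_smul, smul_smul, mul_assoc]
  have hroots : (c - q) * (c + q⁻¹) = 0 := by linear_combination hc - mul_inv_cancel₀ hq
  rcases mul_eq_zero.mp hroots with h | h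
  · exact hb₁ (by rw [hb, sub_eq_zero.mp h]; ring)
  · exact hb₂ (by rw [hb, eq_neg_of_add_eq_zero_left h]; ring)

end EigenvectorSwap

section HeckeRelations

variable {R m n q qinv v}

theorem sigN_of_lt {i : ℕ} (hi : i < n - 1) :
    sigN R m n q qinv v i
      = RingQuot.mkAlgHom R (cycRel R m n q qinv v) (FreeAlgebra.ι R (CycGen.sig ⟨i, hi⟩)) :=
  dif_pos hi

theorem sigN_of_not_lt {i : ℕ} (hi : ¬i < n - 1) : sigN R m n q qinv v i = 1 :=
  dif_neg hi

theorem sigN_mul_self {i : ℕ} (hi : i < n - 1) :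
    sigN R m n q qinv v i * sigN R m n q qinv v i
      = (q - qinv) • sigN R m n q qinv v i + 1 := by
  simpa [sigN_of_lt hi] using RingQuot.mkAlgHom_rel R (cycRel.quadratic (m := m) (q := q)
    (qinv := qinv) (v := v) ⟨i, hi⟩)

theorem commute_sigN_sigN {i j : ℕ} (hij : i + 1 < j) :
    Commute (sigN R m n q qinv v i) (sigN R m n q qinv v j) := by
  by_cases hj : j < n - 1
  · have hi : i < n - 1 := by omega
    have h := RingQuot.mkAlgHom_rel R
      (cycRel.comm (q := q) (qinv := qinv) (v := v) ⟨i, hi⟩ ⟨j, hj⟩ hij)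
    rw [map_mul, map_mul] at h
    rw [sigN_of_lt hi, sigN_of_lt hj]
    exact h
  · rw [sigN_of_not_lt hj]
    exact Commute.one_right _

theorem sigN_braid {i : ℕ} (hi : i + 1 < n - 1) :
    sigN R m n q qinv v i * sigN R m n q qinv v (i + 1) * sigN R m n q qinv v i
      = sigN R m n q qinv v (i + 1) * sigN R m n q qinv v i * sigN R m n q qinv v (i + 1) := by
  simpa [sigN_of_lt hi, sigN_of_lt (show i < n - 1 by omega)] using RingQuot.mkAlgHom_rel R
    (cycRel.braid (m := m) (q := q) (qinv := qinv) (v := v) ⟨i, by omega⟩ ⟨i + 1, hi⟩ rfl)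

theorem commute_tauH_sigN {i : ℕ} (hi : 0 < i) :
    Commute (tauH R m n q qinv v) (sigN R m n q qinv v i) := by
  by_cases hin : i < n - 1
  · have h := RingQuot.mkAlgHom_rel R
      (cycRel.tauComm (m := m) (q := q) (qinv := qinv) (v := v) ⟨i, hin⟩ hi)
    rw [map_mul, map_mul] at h
    rw [sigN_of_lt hin]
    exact h
  · rw [sigN_of_not_lt hin]
    exact Commute.one_right _

theorem commute_sigN_JM_of_lt {i k : ℕ} (hk : k < i) :
    Commute (sigN R m n q qinv v i) (JM R m n q qinv v k) := by
  induction k with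
  | zero => exact (commute_tauH_sigN hk).symm
  | succ k ih =>
    have hs : Commute (sigN R m n q qinv v i) (sigN R m n q qinv v k) :=
      (commute_sigN_sigN (by omega)).symm
    exact (hs.mul_right (ih (by omega))).mul_right hs

theorem commute_sigN_JM_of_succ_lt {i k : ℕ} (hik : i + 1 < k) (hk : k < n) :
    Commute (sigN R m n q qinv v i) (JM R m n q qinv v k) := by
  induction k, hik using Nat.le_induction with
  | base =>
    exact commute_conj_conj_of_braid (sigN_braid (by omega)) (commute_sigN_JM_of_lt (by omega))
  | succ k hik ih =>
    have hs : Commute (sigN R m n q qinv v i) (sigN R m n q qinv v k) :=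
      commute_sigN_sigN (by omega)
    exact (hs.mul_right (ih (by omega))).mul_right hs

theorem commute_sigN_JM {i k : ℕ} (hki : k ≠ i) (hki' : k ≠ i + 1) (hk : k < n) :
    Commute (sigN R m n q qinv v i) (JM R m n q qinv v k) := by
  rcases lt_or_gt_of_ne hki with hlt | hgt
  · exact commute_sigN_JM_of_lt hlt
  · exact commute_sigN_JM_of_succ_lt (by omega) hk

end HeckeRelations

/-- If `e` is a nonzero common eigenvector of the Jucys–Murphy
elements in a `C`-representation, with `J_i e = a_i e`, and `a_{i+1} ≠ q^{±2} a_i`,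
then `e' = σ_i e - ((q-q⁻¹) a_{i+1}/(a_{i+1}-a_i)) e` is a nonzero common
eigenvector with eigenvalue string obtained by exchanging `a_i` and `a_{i+1}`. -/
theorem crep_intertwined_eigenvector (m n : ℕ) (q : ℂ) (hq : q ≠ 0)
    (v : Fin m → ℂ)
    (V : Type) [AddCommGroup V] [Module ℂ V]
    (ρ : CycHecke ℂ m n q q⁻¹ v →ₐ[ℂ] Module.End ℂ V) (hC : IsCRep m n q v ρ)
    (e : V) (he : e ≠ 0) (a : Fin n → ℂ)
    (ha : ∀ i : Fin n, ρ (JM ℂ m n q q⁻¹ v (i : ℕ)) e = a i • e) :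
    ∀ (i : ℕ) (h : i + 1 < n),
      a ⟨i + 1, h⟩ ≠ q ^ 2 * a ⟨i, by omega⟩ →
      a ⟨i + 1, h⟩ ≠ q⁻¹ ^ 2 * a ⟨i, by omega⟩ →
      ∀ e' : V,
        e' = ρ (sigN ℂ m n q q⁻¹ v i) e -
              ((q - q⁻¹) * a ⟨i + 1, h⟩ / (a ⟨i + 1, h⟩ - a ⟨i, by omega⟩)) • e →
        e' ≠ 0 ∧
        ∀ k : Fin n, ρ (JM ℂ m n q q⁻¹ v (k : ℕ)) e' =
          (if (k : ℕ) = i then a ⟨i + 1, h⟩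
            else if (k : ℕ) = i + 1 then a ⟨i, by omega⟩ else a k) • e' := by
  intro i h hb₁ hb₂ e' he'
  set S := ρ (sigN ℂ m n q q⁻¹ v i)
  set X := ρ (JM ℂ m n q q⁻¹ v i)
  have hS : S * S = (q - q⁻¹) • S + 1 := by
    rw [← map_mul, sigN_mul_self (by omega), map_add, map_smul, map_one]
  have hY : ρ (JM ℂ m n q q⁻¹ v (i + 1)) = S * X * S := by rw [← map_mul, ← map_mul]; rfl
  have hXe : X e = a ⟨i, by omega⟩ • e := ha ⟨i, by omega⟩
  have hYe : (S * X * S) e = a ⟨i + 1, h⟩ • e := hY ▸ ha ⟨i + 1, h⟩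
  have hab := ne_of_iSup_eigenspace_eq_top hq (hC.1 i (by omega)) hS he hXe hYe hb₁
  have hc := div_mul_cancel₀ ((q - q⁻¹) * a ⟨i + 1, h⟩) (sub_ne_zero.mpr hab)
  subst he'
  refine ⟨sub_ne_zero.mpr (apply_ne_smul_of_mul_self hq hS he hXe hYe hb₁ hb₂ _), ?_⟩
  rintro ⟨k, hk⟩
  dsimp only
  by_cases hki : k = i
  · subst hki
    rw [if_pos rfl]
    exact apply_sub_smul_eq_of_mul_self hS hXe hYe hc
  by_cases hki' : k = i + 1
  · subst hki'
    rw [if_neg hki, if_pos rfl, hY]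
    exact conj_apply_sub_smul_eq_of_mul_self hS hXe hYe hc
  have hcomm : Commute S (ρ (JM ℂ m n q q⁻¹ v k)) := (commute_sigN_JM hki hki' hk).map ρ
  rw [if_neg hki, if_neg hki', map_sub, map_smul, ← Module.End.mul_apply, ← hcomm.eq,
    Module.End.mul_apply, ha ⟨k, hk⟩, map_smul, smul_sub, smul_comm]
end
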